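/- arXiv:2303.10285 — 2 statements merged into one kernel-verified Lean document; each statement's English description precedes it below -/
import Mathlib

section
/- Every non-autonomous polynomial ODE system ẋ = p(x,u) with differentiable inputs u admits a monomial quadratization, and the order of an optimal monomial quadratization does not exceed ∏_{i=1}^{n+r}(dᵢ+1), where dᵢ = deg_{xᵢ} p for 1 ≤ i ≤ n and d_{n+i} = deg_{uᵢ} p for 1 ≤ i ≤ r. Specifically, the set M of all monomials m(x,u) with deg_{xᵢ} m ≤ dᵢ and deg_{uᵢ} m ≤ d_{n+i} is a quadratization: every monomial appearing in the derivative of any m ∈ M along solutions (treating u̇ as symbols) is a product of at most two elements of M ∪ {u̇₁,…,u̇ᵣ}, with at most one factor being some u̇ⱼ. -/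
open MvPolynomial

/-- Lie derivative of a polynomial `m` in states `x` (indices `Sum.inl`) and inputs `u`
(indices `Sum.inr`) along the system `ẋ = p(x,u)`, computed in the larger polynomial ring
whose extra variables (the second `Fin r` summand) stand for the input derivatives `u̇`. -/
noncomputable def lieDeriv {n r : ℕ} (p : Fin n → MvPolynomial (Fin n ⊕ Fin r) ℂ)
    (m : MvPolynomial (Fin n ⊕ Fin r) ℂ) :
    MvPolynomial ((Fin n ⊕ Fin r) ⊕ Fin r) ℂ :=
  (∑ i : Fin n, rename Sum.inl (p i * pderiv (Sum.inl i) m)) +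
    ∑ j : Fin r, X (Sum.inr j) * rename Sum.inl (pderiv (Sum.inr j) m)

/-- `g` (an element of the ring with variables `x, u, u̇`) is expressible as a polynomial of
total degree at most two in `(x, u, u̇, w)`, with each `u̇ⱼ` appearing at most linearly. -/
def IsQuadExpr {n r ℓ : ℕ} (w : Fin ℓ → MvPolynomial (Fin n ⊕ Fin r) ℂ)
    (g : MvPolynomial ((Fin n ⊕ Fin r) ⊕ Fin r) ℂ) : Prop :=
  ∃ q : MvPolynomial ((Fin n ⊕ Fin r) ⊕ (Fin r ⊕ Fin ℓ)) ℂ,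
    q.totalDegree ≤ 2 ∧ (∀ j : Fin r, q.degreeOf (Sum.inr (Sum.inl j)) ≤ 1) ∧
    aeval (Sum.elim (fun v => X (Sum.inl v))
      (Sum.elim (fun j => X (Sum.inr j)) (fun k => rename Sum.inl (w k)))) q = g

section helpers

variable {n r ℓ : ℕ} {w : Fin ℓ → MvPolynomial (Fin n ⊕ Fin r) ℂ}

lemma isQuadExpr_zero : IsQuadExpr w 0 :=
  ⟨0, by simp, by simp, by simp⟩

lemma isQuadExpr_add {g h : MvPolynomial ((Fin n ⊕ Fin r) ⊕ Fin r) ℂ}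
    (hg : IsQuadExpr w g) (hh : IsQuadExpr w h) : IsQuadExpr w (g + h) := by
  obtain ⟨q1, ht1, hd1, he1⟩ := hg
  obtain ⟨q2, ht2, hd2, he2⟩ := hh
  refine ⟨q1 + q2, ?_, ?_, ?_⟩
  · exact le_trans (totalDegree_add q1 q2) (max_le ht1 ht2)
  · intro j
    exact le_trans (degreeOf_add_le _ q1 q2) (max_le (hd1 j) (hd2 j))
  · rw [map_add, he1, he2]

lemma isQuadExpr_smul (c : ℂ) {g : MvPolynomial ((Fin n ⊕ Fin r) ⊕ Fin r) ℂ}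
    (hg : IsQuadExpr w g) : IsQuadExpr w (c • g) := by
  obtain ⟨q, ht, hd, he⟩ := hg
  refine ⟨c • q, le_trans (totalDegree_smul_le c q) ht, ?_, ?_⟩
  · intro j
    rw [smul_eq_C_mul]
    exact le_trans (degreeOf_mul_le _ _ _) (by simpa using hd j)
  · rw [map_smul, he]

lemma isQuadExpr_sum {ι : Type*} (s : Finset ι)
    (f : ι → MvPolynomial ((Fin n ⊕ Fin r) ⊕ Fin r) ℂ)
    (h : ∀ i ∈ s, IsQuadExpr w (f i)) : IsQuadExpr w (∑ i ∈ s, f i) := by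
  classical
  induction s using Finset.induction_on with
  | empty => simpa using (isQuadExpr_zero : IsQuadExpr w 0)
  | insert _ _ hx ih =>
    rw [Finset.sum_insert hx]
    exact isQuadExpr_add (h _ (Finset.mem_insert_self _ _))
      (ih fun i hi => h i (Finset.mem_insert_of_mem hi))

lemma isQuadExpr_w (k : Fin ℓ) : IsQuadExpr w (rename Sum.inl (w k)) := by
  refine ⟨X (Sum.inr (Sum.inr k)), ?_, ?_, ?_⟩
  · simp only [totalDegree_X]; omega
  · intro j; simp [degreeOf_X]
  · simp

lemma isQuadExpr_mul_w (k1 k2 : Fin ℓ) :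
    IsQuadExpr w (rename Sum.inl (w k1) * rename Sum.inl (w k2)) := by
  refine ⟨X (Sum.inr (Sum.inr k1)) * X (Sum.inr (Sum.inr k2)), ?_, ?_, ?_⟩
  · exact le_trans (totalDegree_mul _ _) (by simp)
  · intro j
    exact le_trans (degreeOf_mul_le _ _ _) (by simp [degreeOf_X])
  · simp

lemma isQuadExpr_udot_w (j : Fin r) (k : Fin ℓ) :
    IsQuadExpr w (X (Sum.inr j) * rename Sum.inl (w k)) := by
  refine ⟨X (Sum.inr (Sum.inl j)) * X (Sum.inr (Sum.inr k)), ?_, ?_, ?_⟩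
  · exact le_trans (totalDegree_mul _ _) (by simp)
  · intro j'
    refine le_trans (degreeOf_mul_le _ _ _) ?_
    by_cases h : j' = j <;> simp [degreeOf_X, h]
  · simp

end helpers

/-- Every non-autonomous polynomial ODE system `ẋ = p(x, u)` with differentiable inputs
admits a monomial quadratization of order at most `∏ (dᵥ + 1)`, where `dᵥ` is the degree of
`p` in the variable `v` (state or input). -/
theorem stmt5 (n r : ℕ) (p : Fin n → MvPolynomial (Fin n ⊕ Fin r) ℂ) :
    ∃ (ℓ : ℕ) (w : Fin ℓ → MvPolynomial (Fin n ⊕ Fin r) ℂ),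
      ℓ ≤ ∏ v : Fin n ⊕ Fin r, ((Finset.univ.sup fun i => (p i).degreeOf v) + 1) ∧
      (∀ k, ∃ s, w k = monomial s (1 : ℂ)) ∧
      (∀ i : Fin n, IsQuadExpr w (rename Sum.inl (p i))) ∧
      (∀ k : Fin ℓ, IsQuadExpr w (lieDeriv p (w k))) := by
  classical
  set d : Fin n ⊕ Fin r → ℕ := fun v => Finset.univ.sup fun i => (p i).degreeOf v with hd
  set ℓ : ℕ := ∏ v : Fin n ⊕ Fin r, (d v + 1) with hℓ
  have hcard : Fintype.card (∀ v : Fin n ⊕ Fin r, Fin (d v + 1)) = ℓ := by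
    simp [hℓ, Fintype.card_pi]
  let e : (∀ v : Fin n ⊕ Fin r, Fin (d v + 1)) ≃ Fin ℓ := Fintype.equivFinOfCardEq hcard
  set w : Fin ℓ → MvPolynomial (Fin n ⊕ Fin r) ℂ := fun k =>
    monomial (Finsupp.equivFunOnFinite.symm fun v => ((e.symm k) v : ℕ)) 1 with hw
  -- every small exponent is realized
  have hreal : ∀ s : (Fin n ⊕ Fin r) →₀ ℕ, (∀ v, s v ≤ d v) →
      ∃ k, w k = monomial s 1 := by
    intro s hs
    refine ⟨e fun v => ⟨s v, Nat.lt_succ_of_le (hs v)⟩, ?_⟩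
    simp only [hw, Equiv.symm_apply_apply]
    congr 1
    ext v
    simp
  -- monomials of p i have small exponents
  have hsupp : ∀ (i : Fin n) (t : (Fin n ⊕ Fin r) →₀ ℕ), t ∈ (p i).support →
      ∀ v, t v ≤ d v := by
    intro i t ht v
    refine le_trans (monomial_le_degreeOf v ht) ?_
    show degreeOf v (p i) ≤ Finset.univ.sup fun i => degreeOf v (p i)
    exact Finset.le_sup (f := fun i => degreeOf v (p i)) (Finset.mem_univ i)
  -- quadratic expressibility of (p i) * monomial s'' c when s'' is small
  have key : ∀ (i : Fin n) (s'' : (Fin n ⊕ Fin r) →₀ ℕ) (c : ℂ), (∀ v, s'' v ≤ d v) →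
      IsQuadExpr w (rename Sum.inl ((p i) * monomial s'' c)) := by
    intro i s'' c hs''
    have hpi : p i * monomial s'' c =
        ∑ t ∈ (p i).support, ((p i).coeff t * c) • (monomial t 1 * monomial s'' 1) := by
      conv_lhs => rw [(p i).as_sum]
      rw [Finset.sum_mul]
      refine Finset.sum_congr rfl fun t ht => ?_
      rw [monomial_mul, monomial_mul, smul_monomial]
      simp [mul_comm]
    rw [hpi, map_sum]
    refine isQuadExpr_sum _ _ fun t ht => ?_
    rw [map_smul, map_mul]
    obtain ⟨k1, hk1⟩ := hreal t (hsupp i t ht)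
    obtain ⟨k2, hk2⟩ := hreal s'' hs''
    rw [← hk1, ← hk2]
    exact isQuadExpr_smul _ (isQuadExpr_mul_w k1 k2)
  refine ⟨ℓ, w, le_refl _, fun k => ⟨_, rfl⟩, ?_, ?_⟩
  · -- p i itself
    intro i
    have : rename (Sum.inl : Fin n ⊕ Fin r → (Fin n ⊕ Fin r) ⊕ Fin r) (p i) =
        rename Sum.inl ((p i) * monomial 0 1) := by simp
    rw [this]
    exact key i 0 1 (by simp)
  · -- Lie derivatives
    intro k
    rw [lieDeriv, hw]
    set s : (Fin n ⊕ Fin r) →₀ ℕ :=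
      Finsupp.equivFunOnFinite.symm fun v => ((e.symm k) v : ℕ) with hs
    have hsv : ∀ v, s v ≤ d v := by
      intro v
      simpa [hs] using Nat.lt_succ_iff.mp ((e.symm k) v).isLt
    have hle : ∀ (x : Fin n ⊕ Fin r) (v : Fin n ⊕ Fin r),
        ((s - Finsupp.single x 1 : (Fin n ⊕ Fin r) →₀ ℕ)) v ≤ d v := by
      intro x v
      refine le_trans ?_ (hsv v)
      rw [Finsupp.tsub_apply]
      exact Nat.sub_le _ _
    refine isQuadExpr_add (isQuadExpr_sum _ _ fun i _ => ?_)
      (isQuadExpr_sum _ _ fun j _ => ?_)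
    · rw [pderiv_monomial]
      exact key i _ _ (hle (Sum.inl i))
    · rw [pderiv_monomial]
      obtain ⟨k', hk'⟩ := hreal _ (hle (Sum.inr j))
      have hsplit : (X (Sum.inr j) : MvPolynomial ((Fin n ⊕ Fin r) ⊕ Fin r) ℂ) *
          rename Sum.inl (monomial (s - Finsupp.single (Sum.inr j) 1)
            ((1 : ℂ) * s (Sum.inr j))) =
          ((s (Sum.inr j) : ℂ)) • (X (Sum.inr j) * rename Sum.inl (w k')) := by
        rw [hk']
        rw [show ((1 : ℂ) * s (Sum.inr j)) = (s (Sum.inr j) : ℂ) • 1 by simp,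
          ← smul_monomial, map_smul, mul_smul_comm]
      rw [hsplit]
      exact isQuadExpr_smul _ (isQuadExpr_udot_w j k')
end

section
/- Let p₀ be a polynomial vector of total degree d in x = (x₁,…,x_n), and let p₁,…,p_r be polynomial vectors of total degree at most 1. Then the set M of all monomials in x of total degree at most d is an input-free quadratization of the polynomial-bilinear system ẋ = p₀(x) + ∑ⱼ pⱼ(x)uⱼ: for every monomial m ∈ M, its derivative along solutions equals a polynomial of total degree at most two in the elements of M, with the inputs uⱼ appearing only linearly (multiplying at-most-quadratic expressions that are linear in M). -/
/-!
Write `∂ᵢm` for `∂m/∂xᵢ`. It is a scalar multiple of `m / xᵢ`, so it vanishes or has degree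
`deg m - 1 < d`. Hence every term `x^s ∂ᵢm` coming from a monomial `x^s` of `p₀,ᵢ` is a product of
two elements of `M`, and `pⱼ,ᵢ ∂ᵢm` has degree at most `d`, i.e. it is a linear combination of
elements of `M`. Products `x^s x^t` and `uⱼ x^t` with `x^s, x^t ∈ M` are the images of quadratic
monomials in the new variables that are affine in the inputs. The images of all such
polynomials form a submodule, so the derivative of `m`, a linear combination of these
products, lies in it.
-/

open MvPolynomial

namespace MvPolynomial

variable {σ ι R : Type*} [CommSemiring R]

lemma totalDegree_mul_pderiv_monomial_le (f : MvPolynomial σ R) (i : σ) (m : σ →₀ ℕ) :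
    (f * pderiv i (monomial m 1)).totalDegree ≤ f.totalDegree + (m.sum fun _ e => e) - 1 := by
  rcases eq_or_ne (m i) 0 with hi | hi
  · simp [hi]
  have hm : ((m - Finsupp.single i 1).sum fun _ e => e) + 1 = m.sum fun _ e => e := by
    conv_rhs => rw [← Finsupp.sub_add_single_one_cancel hi]
    rw [Finsupp.sum_add_index' (fun _ => rfl) (fun _ _ _ => rfl), Finsupp.sum_single_index rfl]
  calc _ ≤ f.totalDegree + (pderiv i (monomial m (1 : R))).totalDegree := totalDegree_mul _ _
    _ ≤ f.totalDegree + (m - Finsupp.single i 1).sum fun _ e => e := by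
      grw [pderiv_monomial, totalDegree_monomial_le]; rfl
    _ = _ := by omega

lemma totalDegree_pderiv_monomial_le (i : σ) (m : σ →₀ ℕ) :
    (pderiv i (monomial m (1 : R))).totalDegree ≤ m.sum fun _ e => e := by
  simpa using
    (totalDegree_mul_pderiv_monomial_le (1 : MvPolynomial σ R) i m).trans (Nat.sub_le _ _)

variable (σ ι) in
def quadraticExponents (d : ℕ) : Set ((σ →₀ ℕ) ⊕ ι →₀ ℕ) :=
  {μ | (μ.sum fun _ e => e) ≤ 2 ∧ (∀ j, μ (.inr j) ≤ 1) ∧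
    ∀ s, μ (.inl s) ≠ 0 → (s.sum fun _ e => e) ≤ d}

lemma degree_bounds_of_mem_restrictSupport_quadraticExponents {d : ℕ}
    {q : MvPolynomial ((σ →₀ ℕ) ⊕ ι) R} (hq : q ∈ restrictSupport R (quadraticExponents σ ι d)) :
    q.totalDegree ≤ 2 ∧ (∀ j, q.degreeOf (.inr j) ≤ 1) ∧
      ∀ s, .inl s ∈ q.vars → (s.sum fun _ e => e) ≤ d := by
  refine ⟨Finset.sup_le fun μ hμ => (hq hμ).1, fun j => degreeOf_le_iff.2 fun μ hμ => (hq hμ).2.1 j,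
    fun s hs => ?_⟩
  obtain ⟨μ, hμ, hsμ⟩ := (mem_vars_iff_mem_support _).1 hs
  exact (hq hμ).2.2 s (Finsupp.mem_support_iff.1 hsμ)

variable (σ ι R) in
noncomputable def aevalMonomials : MvPolynomial ((σ →₀ ℕ) ⊕ ι) R →ₐ[R] MvPolynomial (σ ⊕ ι) R :=
  aeval (Sum.elim (fun s => rename .inl (monomial s 1)) (fun j => X (.inr j)))

variable (σ ι R) in
noncomputable def quadraticSpan (d : ℕ) : Submodule R (MvPolynomial (σ ⊕ ι) R) :=
  (restrictSupport R (quadraticExponents σ ι d)).map (aevalMonomials σ ι R).toLinearMap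

variable {d : ℕ}

lemma rename_monomial_mul_mem_quadraticSpan {s t : σ →₀ ℕ} (hs : (s.sum fun _ e => e) ≤ d)
    (ht : (t.sum fun _ e => e) ≤ d) :
    rename .inl (monomial s 1) * rename .inl (monomial t 1) ∈ quadraticSpan σ ι R d := by
  classical
  refine ⟨X (.inl s) * X (.inl t), ?_, by simp [aevalMonomials]⟩
  rw [X, X, monomial_mul, SetLike.mem_coe, monomial_mem_restrictSupport]
  left
  refine ⟨by simp [Finsupp.sum_add_index'], by simp, fun u hu => ?_⟩
  simp only [Finsupp.add_apply, Finsupp.single_apply] at hu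
  split_ifs at hu <;> simp_all

lemma X_inr_mul_rename_monomial_mem_quadraticSpan (j : ι) {t : σ →₀ ℕ}
    (ht : (t.sum fun _ e => e) ≤ d) :
    X (.inr j) * rename .inl (monomial t 1) ∈ quadraticSpan σ ι R d := by
  classical
  refine ⟨X (.inr j) * X (.inl t), ?_, by simp [aevalMonomials]⟩
  rw [X, X, monomial_mul, SetLike.mem_coe, monomial_mem_restrictSupport]
  left
  refine ⟨by simp [Finsupp.sum_add_index'], fun k => ?_, fun u hu => ?_⟩
  · simp only [Finsupp.add_apply, Finsupp.single_apply]
    split_ifs <;> simp_all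
  · simp only [Finsupp.add_apply, Finsupp.single_apply] at hu
    split_ifs at hu <;> simp_all

lemma map_rename_restrictTotalDegree :
    (restrictTotalDegree σ R d).map (rename (R := R) (Sum.inl (β := ι))).toLinearMap =
      Submodule.span R ((fun s => rename .inl (monomial s 1)) ''
        {s : σ →₀ ℕ | (s.sum fun _ e => e) ≤ d}) := by
  rw [restrictTotalDegree, restrictSupport_eq_span, Submodule.map_span, Set.image_image]
  rfl

lemma rename_mul_rename_mem_quadraticSpan {f g : MvPolynomial σ R} (hf : f.totalDegree ≤ d)
    (hg : g.totalDegree ≤ d) :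
    rename .inl f * rename .inl g ∈ quadraticSpan σ ι R d := by
  suffices h : (restrictTotalDegree σ R d).map (rename (Sum.inl (β := ι))).toLinearMap *
      (restrictTotalDegree σ R d).map (rename (Sum.inl (β := ι))).toLinearMap ≤
        quadraticSpan σ ι R d from
    h (Submodule.mul_mem_mul ⟨f, (mem_restrictTotalDegree σ d f).2 hf, rfl⟩
      ⟨g, (mem_restrictTotalDegree σ d g).2 hg, rfl⟩)
  rw [map_rename_restrictTotalDegree, Submodule.span_mul_span, Submodule.span_le,
    Set.mul_subset_iff]
  simp only [Set.forall_mem_image]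
  exact fun s hs t ht => rename_monomial_mul_mem_quadraticSpan hs ht

lemma X_inr_mul_rename_mem_quadraticSpan (j : ι) {f : MvPolynomial σ R} (hf : f.totalDegree ≤ d) :
    X (.inr j) * rename .inl f ∈ quadraticSpan σ ι R d := by
  suffices h : Submodule.span R {X (.inr j)} *
      (restrictTotalDegree σ R d).map (rename (Sum.inl (β := ι))).toLinearMap ≤
        quadraticSpan σ ι R d from
    h (Submodule.mul_mem_mul (Submodule.mem_span_singleton_self _)
      ⟨f, (mem_restrictTotalDegree σ d f).2 hf, rfl⟩)
  rw [map_rename_restrictTotalDegree, Submodule.span_mul_span, Submodule.span_le,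
    Set.mul_subset_iff]
  simp only [Set.mem_singleton_iff, Set.forall_mem_image, forall_eq]
  exact fun t ht => X_inr_mul_rename_monomial_mem_quadraticSpan j ht

theorem lieDerivative_monomial_mem_quadraticSpan [Fintype σ] [Fintype ι]
    (p0 : σ → MvPolynomial σ R) (p : ι → σ → MvPolynomial σ R)
    (hp0 : ∀ i, (p0 i).totalDegree ≤ d) (hp : ∀ j i, (p j i).totalDegree ≤ 1)
    {m : σ →₀ ℕ} (hm : (m.sum fun _ e => e) ≤ d) :
    ∑ i, (rename .inl (p0 i) + ∑ j, X (.inr j) * rename .inl (p j i)) *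
      rename .inl (pderiv i (monomial m 1)) ∈ quadraticSpan σ ι R d := by
  refine Submodule.sum_mem _ fun i _ => ?_
  rw [add_mul, Finset.sum_mul]
  refine add_mem (rename_mul_rename_mem_quadraticSpan (hp0 i)
    ((totalDegree_pderiv_monomial_le i m).trans hm)) (Submodule.sum_mem _ fun j _ => ?_)
  rw [mul_assoc, ← map_mul]
  refine X_inr_mul_rename_mem_quadraticSpan j ?_
  have hprod := totalDegree_mul_pderiv_monomial_le (p j i) i m
  have hpji := hp j i
  omega

end MvPolynomial

/-- If `p₀` has total degree at most `d` and each `pⱼ` has total degree at most `1`, then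
the set of all monomials of total degree at most `d` is an input-free quadratization of the
polynomial-bilinear system `ẋ = p₀(x) + ∑ⱼ pⱼ(x)uⱼ`: the Lie derivative of each such
monomial is a polynomial of total degree at most two in these monomials, affine in the
inputs `u`. -/
theorem stmt8 (n r d : ℕ)
    (p0 : Fin n → MvPolynomial (Fin n) ℂ)
    (p : Fin r → Fin n → MvPolynomial (Fin n) ℂ)
    (hp0 : ∀ i, (p0 i).totalDegree ≤ d)
    (hp : ∀ j i, (p j i).totalDegree ≤ 1) :
    ∀ m : Fin n →₀ ℕ, (m.sum fun _ e => e) ≤ d →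
      ∃ q : MvPolynomial ((Fin n →₀ ℕ) ⊕ Fin r) ℂ,
        q.totalDegree ≤ 2 ∧
        (∀ j : Fin r, q.degreeOf (Sum.inr j) ≤ 1) ∧
        (∀ s : Fin n →₀ ℕ, Sum.inl s ∈ q.vars → (s.sum fun _ e => e) ≤ d) ∧
        aeval (Sum.elim
            (fun s : Fin n →₀ ℕ =>
              (rename Sum.inl (monomial s (1 : ℂ)) : MvPolynomial (Fin n ⊕ Fin r) ℂ))
            (fun j => X (Sum.inr j))) q =
          ∑ i : Fin n,
            (rename Sum.inl (p0 i) + ∑ j : Fin r, X (Sum.inr j) * rename Sum.inl (p j i)) *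
              rename Sum.inl (pderiv i (monomial m (1 : ℂ))) := by
  intro m hm
  obtain ⟨q, hq, hq_eval⟩ := lieDerivative_monomial_mem_quadraticSpan p0 p hp0 hp hm
  obtain ⟨hdeg, hinput, hvars⟩ := degree_bounds_of_mem_restrictSupport_quadraticExponents hq
  exact ⟨q, hdeg, hinput, hvars, hq_eval⟩
end
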